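/- Canonical finite decomposition of a valued deformation of a Lie algebra: let μ₀ be a Lie bracket on ℂⁿ, let A be a deformation ring over ℂ with maximal ideal m, and let μ be an A-bilinear, antisymmetric map Aⁿ × Aⁿ → Aⁿ satisfying the Jacobi identity, such that for all standard basis vectors e_i, e_j of ℂⁿ ⊂ Aⁿ every coordinate of μ(e_i, e_j) − μ₀(e_i, e_j) lies in m. Then there exist an integer k, elements ε₁, ε₂, …, ε_k ∈ m, and linearly independent alternating bilinear maps φ₁, …, φ_k : ℂⁿ × ℂⁿ → ℂⁿ such that for all X, Y ∈ ℂⁿ, μ(X,Y) = μ₀(X,Y) + ε₁·φ₁(X,Y) + ε₁ε₂·φ₂(X,Y) + ⋯ + ε₁ε₂⋯ε_k·φ_k(X,Y), where elements of ℂⁿ are viewed in Aⁿ via ℂ → A componentwise. -/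

import Mathlib

/-- A bilinear alternating (antisymmetric) map `ℂⁿ × ℂⁿ → ℂⁿ`. -/
def IsAltBilinearMap (n : ℕ) (φ : (Fin n → ℂ) → (Fin n → ℂ) → (Fin n → ℂ)) : Prop :=
  (∀ X X' Y, φ (X + X') Y = φ X Y + φ X' Y) ∧
  (∀ (c : ℂ) X Y, φ (c • X) Y = c • φ X Y) ∧
  (∀ X Y Y', φ X (Y + Y') = φ X Y + φ X Y') ∧
  (∀ (c : ℂ) X Y, φ X (c • Y) = c • φ X Y) ∧
  (∀ X Y, φ X Y = - φ Y X)

/-- The componentwise embedding `ℂⁿ → Aⁿ` induced by the structure map `ℂ → A`. -/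
def embed (A : Type) [CommRing A] [Algebra ℂ A] (n : ℕ) (x : Fin n → ℂ) : Fin n → A :=
  fun j => algebraMap ℂ A (x j)

/-!
The differences `C - C₀` of the structure constants of `μ` and `μ₀` form a finite family of
elements of `m`. In a valuation ring some coordinate `v α₀` of a nonzero family `v` divides all
the others; writing `v = v α₀ • u` and splitting `u` into its residue `w₀ ∈ ℂ^ι` plus a remainder
in `m` vanishing at `α₀`, induction on the support gives `v = ∑ ε₁⋯εᵢ wᵢ` with `εᵢ ∈ m \ {0}`
and the `wᵢ` linearly independent, since `w₀ α₀ = 1` while all later `wᵢ` vanish at `α₀`.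
Such an expansion is unique, the partial products having strictly increasing valuations, so the
antisymmetry of `C - C₀` passes to each `wᵢ`: the `wᵢ` are the structure constants of the
required alternating maps `φᵢ`.
-/

open Finset IsLocalRing

theorem Fin.prod_Iic_succ {M : Type*} [CommMonoid M] {k : ℕ} (f : Fin (k + 1) → M) (i : Fin k) :
    ∏ l ∈ Iic i.succ, f l = f 0 * ∏ l ∈ Iic i, f l.succ := by
  rw [← Finset.Icc_bot, bot_eq_zero, Icc_eq_cons_Ioc (Fin.zero_le _), Finset.prod_cons,
    ← Fin.map_succEmb_Iic, prod_map]
  rfl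

theorem Fin.sum_prod_Iic_mul_succ {R : Type*} [CommSemiring R] {k : ℕ} (ε : Fin (k + 1) → R)
    (x : Fin (k + 1) → R) :
    ∑ i, (∏ l ∈ Iic i, ε l) * x i =
      ε 0 * (x 0 + ∑ i : Fin k, (∏ l ∈ Iic i, ε l.succ) * x i.succ) := by
  simp only [Fin.sum_univ_succ, Fin.prod_Iic_succ, mul_add, mul_sum, mul_assoc]
  rw [← bot_eq_zero, Iic_bot, prod_singleton]

theorem PreValuationRing.exists_dvd_forall {R ι : Type*} [CommRing R] [PreValuationRing R]
    [Finite ι] [Nonempty ι] (v : ι → R) : ∃ i, ∀ j, v i ∣ v j := by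
  obtain ⟨i, -, hi⟩ := Set.Finite.exists_maximalFor (fun j => Ideal.span {v j}) Set.univ
    Set.finite_univ Set.univ_nonempty
  refine ⟨i, fun j => (ValuationRing.dvd_total (v i) (v j)).elim id fun hji => ?_⟩
  simpa only [Ideal.span_singleton_le_span_singleton] using hi trivial
    (Ideal.span_singleton_le_span_singleton.mpr hji)

theorem ValuationRing.exists_eq_mul_of_ne_zero {R ι : Type*} [CommRing R] [IsDomain R]
    [ValuationRing R] [Finite ι] {v : ι → R} (hv : v ≠ 0) :
    ∃ (i₀ : ι) (u : ι → R), v i₀ ≠ 0 ∧ u i₀ = 1 ∧ ∀ i, v i = v i₀ * u i := by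
  obtain ⟨j, hj⟩ := Function.ne_iff.mp hv
  have : Nonempty ι := ⟨j⟩
  obtain ⟨i₀, hi₀⟩ := PreValuationRing.exists_dvd_forall v
  choose u hu using fun j => (hi₀ j : ∃ c, v j = v i₀ * c)
  have hv₀ : v i₀ ≠ 0 := fun h => hj (by simpa [h] using hu j)
  exact ⟨i₀, u, hv₀, mul_left_cancel₀ hv₀ (by rw [← hu, mul_one]), hu⟩

section Expansion

variable {K A : Type*} [Field K] [CommRing A] [Algebra K A]

theorem IsLocalRing.algebraMap_mem_maximalIdeal_iff [IsLocalRing A] {c : K} :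
    algebraMap K A c ∈ maximalIdeal A ↔ c = 0 := by
  refine ⟨fun h => by_contra fun hc => ?_, fun h => by simp [h]⟩
  exact (mem_maximalIdeal _).mp h ((isUnit_iff_ne_zero.mpr hc).map _)

theorem IsLocalRing.sub_algebraMap_mem_maximalIdeal [IsLocalRing A] (r : A →ₐ[K] K) (x : A) :
    x - algebraMap K A (r x) ∈ maximalIdeal A := by
  refine le_maximalIdeal (RingHom.ker_ne_top r) ?_
  simp [RingHom.mem_ker]

theorem eq_zero_of_sum_prod_Iic_mul_algebraMap_eq_zero [IsDomain A] [IsLocalRing A] {k : ℕ}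
    {ε : Fin k → A} (hεm : ∀ i, ε i ∈ maximalIdeal A) (hε0 : ∀ i, ε i ≠ 0) {c : Fin k → K}
    (h : ∑ i, (∏ l ∈ Iic i, ε l) * algebraMap K A (c i) = 0) : c = 0 := by
  induction k with
  | zero => exact Subsingleton.elim _ _
  | succ k ih =>
    rw [Fin.sum_prod_Iic_mul_succ, mul_eq_zero, or_iff_right (hε0 0)] at h
    set S := ∑ i : Fin k, (∏ l ∈ Iic i, ε l.succ) * algebraMap K A (c i.succ)
    have hS : S ∈ maximalIdeal A := sum_mem fun i _ => Ideal.mul_mem_right _ _ <|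
      Ideal.mem_of_dvd _ (dvd_prod_of_mem _ (mem_Iic.mpr le_rfl)) (hεm i.succ)
    have hc₀ : c 0 = 0 := algebraMap_mem_maximalIdeal_iff.mp <| by
      rw [eq_neg_of_add_eq_zero_left h]
      exact neg_mem hS
    have hc : (fun i : Fin k => c i.succ) = 0 :=
      ih (fun i => hεm i.succ) (fun i => hε0 i.succ) (by simpa [hc₀] using h)
    ext i
    exact Fin.cases hc₀ (fun i => congrFun hc i) i

theorem exists_sum_prod_Iic_mul_algebraMap [IsDomain A] [ValuationRing A] (r : A →ₐ[K] K)
    {ι : Type*} [Finite ι] (v : ι → A) (hv : ∀ α, v α ∈ maximalIdeal A) :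
    ∃ (k : ℕ) (ε : Fin k → A) (w : Fin k → ι → K),
      (∀ i, ε i ∈ maximalIdeal A) ∧ (∀ i, ε i ≠ 0) ∧ LinearIndependent K w ∧
      (∀ i α, v α = 0 → w i α = 0) ∧
      ∀ α, v α = ∑ i, (∏ l ∈ Iic i, ε l) * algebraMap K A (w i α) := by
  induction hN : (Function.support v).ncard using Nat.strong_induction_on generalizing v with
  | _ N ih =>
  by_cases hv0 : v = 0
  · exact ⟨0, Fin.elim0, Fin.elim0, Fin.rec0, Fin.rec0, linearIndependent_empty_type,
      Fin.rec0, by simp [hv0]⟩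
  obtain ⟨α₀, u, hα₀, hu₀, hvu⟩ := ValuationRing.exists_eq_mul_of_ne_zero hv0
  set w₀ : ι → K := fun α => r (u α)
  set v' : ι → A := fun α => u α - algebraMap K A (w₀ α)
  have hw₀ : w₀ α₀ = 1 := by simp [w₀, hu₀]
  have hv'₀ : v' α₀ = 0 := by simp [v', hw₀, hu₀]
  have hu_zero {α} (h : v α = 0) : u α = 0 := by
    rw [hvu α] at h
    exact (mul_eq_zero.mp h).resolve_left hα₀
  have hsupp : Function.support v' ⊂ Function.support v := by
    refine (Set.ssubset_iff_of_subset (Function.support_subset_iff'.mpr fun α h => ?_)).mpr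
      ⟨α₀, hα₀, by simpa using hv'₀⟩
    simp [v', w₀, hu_zero (Function.notMem_support.mp h)]
  obtain ⟨k, ε, w, hεm, hε0, hw, hwv, hv'w⟩ := ih _ (hN ▸ Set.ncard_lt_ncard hsupp) v'
    (fun α => sub_algebraMap_mem_maximalIdeal r _) rfl
  refine ⟨k + 1, Fin.cons (v α₀) ε, Fin.cons w₀ w, Fin.cons (hv α₀) hεm, Fin.cons hα₀ hε0,
    linearIndependent_finCons.mpr ⟨hw, fun hmem => ?_⟩, Fin.cons ?_ fun i α h => ?_,
    fun α => ?_⟩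
  · have : Submodule.span K (Set.range w) ≤ LinearMap.ker (LinearMap.proj α₀) :=
      Submodule.span_le.mpr (Set.range_subset_iff.mpr fun i => hwv i α₀ hv'₀)
    simpa [hw₀] using this hmem
  · intro α h
    simp [w₀, hu_zero h]
  · exact hwv i α (by simp [v', w₀, hu_zero h])
  · rw [Fin.sum_prod_Iic_mul_succ, hvu α]
    simp [← hv'w, v']

end Expansion

section StructureConstants

variable {R : Type*} [CommSemiring R] {n : ℕ}

def structureConstants (μ : (Fin n → R) → (Fin n → R) → (Fin n → R)) :
    Fin n × Fin n × Fin n → R :=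
  fun t => μ (Pi.single t.1 1) (Pi.single t.2.1 1) t.2.2

def structureBracket :
    (Fin n × Fin n × Fin n → R) →ₗ[R] (Fin n → R) → (Fin n → R) → (Fin n → R) where
  toFun T X Y c := ∑ a, ∑ b, X a * Y b * T (a, b, c)
  map_add' T T' := by ext; simp [mul_add, sum_add_distrib]
  map_smul' s T := by ext; simp [mul_sum, mul_left_comm]

theorem structureBracket_apply (T : Fin n × Fin n × Fin n → R) (X Y : Fin n → R) (c : Fin n) :
    structureBracket T X Y c = ∑ a, ∑ b, X a * Y b * T (a, b, c) := rfl

theorem structureConstants_structureBracket (T : Fin n × Fin n × Fin n → R) :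
    structureConstants (structureBracket T) = T := by
  ext ⟨a, b, c⟩
  simp [structureConstants, structureBracket_apply, Pi.single_apply]

theorem structureBracket_injective :
    Function.Injective (structureBracket : (Fin n × Fin n × Fin n → R) → _) :=
  Function.LeftInverse.injective structureConstants_structureBracket

theorem LinearMap.eq_structureBracket (B : (Fin n → R) →ₗ[R] (Fin n → R) →ₗ[R] (Fin n → R))
    (X Y : Fin n → R) : B X Y = structureBracket (structureConstants fun X Y => B X Y) X Y := by
  ext c
  conv_lhs => rw [pi_eq_sum_univ' X, pi_eq_sum_univ' Y]
  simp only [map_sum, map_smul, LinearMap.sum_apply, LinearMap.smul_apply, Finset.sum_apply,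
    Pi.smul_apply, smul_eq_mul, structureBracket_apply, structureConstants, mul_sum]
  rw [sum_comm]
  exact sum_congr rfl fun _ _ => sum_congr rfl fun _ _ => by ring

end StructureConstants

theorem isAltBilinearMap_structureBracket {n : ℕ} (T : Fin n × Fin n × Fin n → ℂ)
    (hT : ∀ a b c, T (b, a, c) = -T (a, b, c)) : IsAltBilinearMap n (structureBracket T) := by
  refine ⟨fun X X' Y => ?_, fun s X Y => ?_, fun X Y Y' => ?_, fun s X Y => ?_, fun X Y => ?_⟩ <;>
    ext c
  · simp [structureBracket_apply, add_mul, sum_add_distrib]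
  · simp [structureBracket_apply, mul_sum, mul_assoc]
  · simp [structureBracket_apply, mul_add, add_mul, sum_add_distrib]
  · simp [structureBracket_apply, mul_sum, mul_assoc, mul_left_comm]
  simp only [structureBracket_apply, Pi.neg_apply, ← sum_neg_distrib]
  rw [sum_comm]
  exact sum_congr rfl fun _ _ => sum_congr rfl fun _ _ => by rw [hT]; ring

theorem structureBracket_embed {n : ℕ} (A : Type) [CommRing A] [Algebra ℂ A]
    (T : Fin n × Fin n × Fin n → ℂ) (X Y : Fin n → ℂ) :
    structureBracket (fun t => algebraMap ℂ A (T t)) (embed A n X) (embed A n Y) =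
      embed A n (structureBracket T X Y) := by
  ext c
  simp [structureBracket_apply, embed]

theorem embed_single {n : ℕ} (A : Type) [CommRing A] [Algebra ℂ A] (i : Fin n) :
    embed A n (Pi.single i 1) = Pi.single i 1 := by
  ext j
  by_cases h : j = i <;> simp [embed, h]

theorem valued_deformation_canonical_decomposition_general
    (n : ℕ) (μ₀ : (Fin n → ℂ) → (Fin n → ℂ) → (Fin n → ℂ))
    (hμ₀ : IsAltBilinearMap n μ₀)
    (A : Type) [CommRing A] [IsDomain A] [ValuationRing A] [Algebra ℂ A]
    (hres : Function.Bijective ((IsLocalRing.residue A).comp (algebraMap ℂ A)))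
    (μ : (Fin n → A) → (Fin n → A) → (Fin n → A))
    (hadd₁ : ∀ X X' Y, μ (X + X') Y = μ X Y + μ X' Y)
    (hsmul₁ : ∀ (a : A) X Y, μ (a • X) Y = a • μ X Y)
    (hadd₂ : ∀ X Y Y', μ X (Y + Y') = μ X Y + μ X Y')
    (hsmul₂ : ∀ (a : A) X Y, μ X (a • Y) = a • μ X Y)
    (hskew : ∀ X Y, μ X Y = - μ Y X)
    (hmod : ∀ i j k : Fin n,
      (μ (embed A n (Pi.single i 1)) (embed A n (Pi.single j 1)) k -
        algebraMap ℂ A (μ₀ (Pi.single i 1) (Pi.single j 1) k)) ∈ IsLocalRing.maximalIdeal A) :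
    ∃ (k : ℕ) (ε : Fin k → A) (φ : Fin k → ((Fin n → ℂ) → (Fin n → ℂ) → (Fin n → ℂ))),
      (∀ i, ε i ∈ IsLocalRing.maximalIdeal A) ∧
      (∀ i, IsAltBilinearMap n (φ i)) ∧
      LinearIndependent ℂ φ ∧
      ∀ X Y : Fin n → ℂ,
        μ (embed A n X) (embed A n Y) =
          embed A n (μ₀ X Y) + ∑ i : Fin k, (∏ l ∈ Finset.Iic i, ε l) • embed A n (φ i X Y) := by
  obtain ⟨hμ₀add₁, hμ₀smul₁, hμ₀add₂, hμ₀smul₂, hμ₀skew⟩ := hμ₀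
  -- the residue map `A → A ⧸ m ≃ ℂ`
  let r : A →ₐ[ℂ] ℂ :=
    ((AlgEquiv.ofBijective (Algebra.ofId ℂ (ResidueField A)) hres).symm : _ →ₐ[ℂ] ℂ).comp
      (IsScalarTower.toAlgHom ℂ A (ResidueField A))
  set C := structureConstants μ
  set C₀ := structureConstants μ₀
  set d := fun t => C t - algebraMap ℂ A (C₀ t)
  obtain ⟨k, ε, w, hεm, hε0, hw, -, hdw⟩ := exists_sum_prod_Iic_mul_algebraMap r d
    fun ⟨a, b, c⟩ => by simpa [d, C, C₀, structureConstants, embed_single] using hmod a b c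
  have hw_skew (i : Fin k) (a b c : Fin n) : w i (b, a, c) = -w i (a, b, c) := by
    refine eq_neg_of_add_eq_zero_left (congrFun (eq_zero_of_sum_prod_Iic_mul_algebraMap_eq_zero
      hεm hε0 (c := fun i => w i (b, a, c) + w i (a, b, c)) ?_) i)
    simp only [map_add, mul_add, sum_add_distrib, ← hdw]
    simp [d, C, C₀, structureConstants, hskew (Pi.single b 1), hμ₀skew (Pi.single b 1)]
  have hC : C = (fun t => algebraMap ℂ A (C₀ t)) +
      ∑ i, (∏ l ∈ Iic i, ε l) • fun t => algebraMap ℂ A (w i t) := by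
    ext t
    simp [← hdw, d]
  refine ⟨k, ε, fun i => structureBracket (w i), hεm,
    fun i => isAltBilinearMap_structureBracket _ (hw_skew i),
    hw.map' structureBracket (LinearMap.ker_eq_bot.mpr structureBracket_injective), fun X Y => ?_⟩
  have hμ : ∀ X Y, μ X Y = structureBracket C X Y :=
    (LinearMap.mk₂ A μ hadd₁ hsmul₁ hadd₂ hsmul₂).eq_structureBracket
  have hμ₀ : ∀ X Y, μ₀ X Y = structureBracket C₀ X Y :=
    (LinearMap.mk₂ ℂ μ₀ hμ₀add₁ hμ₀smul₁ hμ₀add₂ hμ₀smul₂).eq_structureBracket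
  rw [hμ, hμ₀, hC, map_add, map_sum]
  simp only [map_smul, Pi.add_apply, Finset.sum_apply, Pi.smul_apply, structureBracket_embed]

/-- **Canonical finite decomposition of a valued deformation of a Lie algebra.**
Let `μ₀` be a Lie bracket on `ℂⁿ`, `A` a deformation ring over `ℂ` (a valuation domain and
`ℂ`-algebra whose residue field is `ℂ`) with maximal ideal `m`, and `μ` an `A`-bilinear
antisymmetric bracket on `Aⁿ` satisfying the Jacobi identity which agrees with `μ₀` modulo `m`
on the standard basis vectors.  Then there exist `k`, elements `ε₁,…,ε_k ∈ m` and linearly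
independent alternating bilinear maps `φ₁,…,φ_k` on `ℂⁿ` such that
`μ(X,Y) = μ₀(X,Y) + ε₁φ₁(X,Y) + ε₁ε₂φ₂(X,Y) + ⋯ + ε₁⋯ε_kφ_k(X,Y)` for all `X, Y ∈ ℂⁿ`. -/
theorem valued_deformation_canonical_decomposition
    (n : ℕ) (μ₀ : (Fin n → ℂ) → (Fin n → ℂ) → (Fin n → ℂ))
    (hμ₀ : IsAltBilinearMap n μ₀)
    (hμ₀jac : ∀ X Y Z, μ₀ X (μ₀ Y Z) + μ₀ Y (μ₀ Z X) + μ₀ Z (μ₀ X Y) = 0)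
    (A : Type) [CommRing A] [IsDomain A] [ValuationRing A] [Algebra ℂ A]
    (hres : Function.Bijective ((IsLocalRing.residue A).comp (algebraMap ℂ A)))
    (μ : (Fin n → A) → (Fin n → A) → (Fin n → A))
    (hadd₁ : ∀ X X' Y, μ (X + X') Y = μ X Y + μ X' Y)
    (hsmul₁ : ∀ (a : A) X Y, μ (a • X) Y = a • μ X Y)
    (hadd₂ : ∀ X Y Y', μ X (Y + Y') = μ X Y + μ X Y')
    (hsmul₂ : ∀ (a : A) X Y, μ X (a • Y) = a • μ X Y)
    (hskew : ∀ X Y, μ X Y = - μ Y X)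
    (hjac : ∀ X Y Z, μ X (μ Y Z) + μ Y (μ Z X) + μ Z (μ X Y) = 0)
    (hmod : ∀ i j k : Fin n,
      (μ (embed A n (Pi.single i 1)) (embed A n (Pi.single j 1)) k -
        algebraMap ℂ A (μ₀ (Pi.single i 1) (Pi.single j 1) k)) ∈ IsLocalRing.maximalIdeal A) :
    ∃ (k : ℕ) (ε : Fin k → A) (φ : Fin k → ((Fin n → ℂ) → (Fin n → ℂ) → (Fin n → ℂ))),
      (∀ i, ε i ∈ IsLocalRing.maximalIdeal A) ∧
      (∀ i, IsAltBilinearMap n (φ i)) ∧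
      LinearIndependent ℂ φ ∧
      ∀ X Y : Fin n → ℂ,
        μ (embed A n X) (embed A n Y) =
          embed A n (μ₀ X Y) + ∑ i : Fin k, (∏ l ∈ Finset.Iic i, ε l) • embed A n (φ i X Y) :=
  valued_deformation_canonical_decomposition_general n μ₀ hμ₀ A hres μ hadd₁ hsmul₁ hadd₂ hsmul₂
    hskew hmod
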